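/- arXiv:2402.18637 — 3 statements merged into one kernel-verified Lean document; each statement's English description precedes it below -/
import Mathlib

section
/- Let X be a topological space, C₊ := ℝ≥0 × X with the product topology, A ∈ ℂ with A ≠ 0, ν : C₊ → ℂ continuous with ν(0, x̂₀) ≠ 0 for some x̂₀ ∈ X, and let ψ = (ψₘ) be a component family with each ψₘ symmetric and continuous. If some ψₘ is nonzero at some argument all of whose frequencies are strictly positive, then for every N ∈ ℕ there exists n ≥ N and p : Fin n → C₊ with Fₙ[ψ](p) ≠ 0. (This is the paper's claim that every nonzero state in a Fock space with nonvanishing memory is necessarily supported on infinitely many BMS particles.) -/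
open scoped BigOperators

noncomputable section

/-- The space `C₊ = ℝ≥0 × X` of null momenta: a frequency `ω ∈ ℝ≥0` and an
angular direction in `X`. -/
abbrev Cplus (X : Type*) := NNReal × X

/-- A component family is symmetric if each component `ψₘ` is invariant under
precomposition with permutations of `Fin m`. -/
def IsSymmFamily {X : Type*} (ψ : ∀ m : ℕ, (Fin m → Cplus X) → ℂ) : Prop :=
  ∀ (m : ℕ) (σ : Equiv.Perm (Fin m)) (p : Fin m → Cplus X), ψ m (p ∘ σ) = ψ m p

/-- The BMS-particle pairing
`Fₙ[ψ](p) = A · Σ_{m=0}^{n} (16π)^m √(n!/m!) (1/(n−m)!) (1/n!)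
  Σ_{σ ∈ Perm(Fin n)} (Π_{i=1}^{m} ω(p_{σ(i)})) ψₘ(p_{σ(1)},…,p_{σ(m)})
  Π_{i=m+1}^{n} ν(p_{σ(i)})`. -/
def pairing {X : Type*} (A : ℂ) (ν : Cplus X → ℂ)
    (ψ : ∀ m : ℕ, (Fin m → Cplus X) → ℂ) (n : ℕ) (p : Fin n → Cplus X) : ℂ :=
  A * ∑ m : Fin (n + 1),
    (((16 * Real.pi) ^ (m : ℕ) * Real.sqrt ((n.factorial : ℝ) / ((m : ℕ).factorial : ℝ))
        / ((n - (m : ℕ)).factorial : ℝ) / (n.factorial : ℝ) : ℝ) : ℂ) *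
      ∑ σ : Equiv.Perm (Fin n),
        (∏ i : Fin n,
          (if (i : ℕ) < (m : ℕ) then (((p (σ i)).1 : ℝ) : ℂ) else ν (p (σ i)))) *
        ψ (m : ℕ) (fun i : Fin (m : ℕ) => p (σ (Fin.castLE (Nat.lt_succ_iff.mp m.isLt) i)))

/-! Let `k` be least such that `ψₖ(p₀) ≠ 0` at some configuration `p₀` of strictly positive
frequencies; by continuity `ψₘ` vanishes identically for `m < k`. Pad `p₀` with
`n - k` zero-frequency particles in a direction where `ν` does not vanish. In `Fₙ` every
summand with `m < k` dies with `ψₘ`, and every summand with `m > k`, or with `m = k` and `σ`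
moving a padding particle into the first `k` slots, contains the factor `ω = 0`. By symmetry of
`ψₖ` the surviving summands are all equal to the nonzero one at `σ = 1`. -/

theorem Finset.sum_ne_zero_of_forall_eq_zero_or_eq {ι M : Type*} [AddCommMonoid M]
    [IsAddTorsionFree M] {s : Finset ι} {f : ι → M} {a : ι} (ha : a ∈ s) (hfa : f a ≠ 0)
    (hf : ∀ i ∈ s, f i = 0 ∨ f i = f a) : ∑ i ∈ s, f i ≠ 0 := by
  classical
  have hconst : ∀ i ∈ s.filter (f · ≠ 0), f i = f a := fun i hi =>
    (hf i (Finset.mem_filter.mp hi).1).resolve_left (Finset.mem_filter.mp hi).2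
  have hcard : (s.filter (f · ≠ 0)).card ≠ 0 :=
    Finset.card_ne_zero_of_mem (Finset.mem_filter.mpr ⟨ha, hfa⟩)
  rw [← Finset.sum_filter_ne_zero, Finset.sum_congr rfl hconst, Finset.sum_const]
  exact fun h => (nsmul_eq_zero_iff.mp h).elim hfa hcard

theorem Fin.le_of_injective_of_forall_lt {n n' m k : ℕ} {f : Fin n → Fin n'}
    (hf : Function.Injective f) (hm : m ≤ n) (h : ∀ i : Fin n, (i : ℕ) < m → (f i : ℕ) < k) :
    m ≤ k := by
  have hinj : Function.Injective fun j : Fin m => (⟨f (Fin.castLE hm j), h _ j.isLt⟩ : Fin k) :=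
    fun a b hab => Fin.castLE_injective hm (hf (Fin.ext (Fin.mk.inj hab)))
  simpa using Fintype.card_le_of_injective _ hinj

namespace Equiv.Perm

variable {n k : ℕ}

def restrictFin (hk : k ≤ n) (σ : Perm (Fin n)) (h : ∀ i : Fin n, (i : ℕ) < k → (σ i : ℕ) < k) :
    Perm (Fin k) :=
  Equiv.ofBijective (fun j => ⟨σ (Fin.castLE hk j), h _ j.isLt⟩) <|
    Finite.injective_iff_bijective.mp fun _ _ hab =>
      Fin.castLE_injective hk (σ.injective (Fin.ext (Fin.mk.inj hab)))

theorem castLE_restrictFin (hk : k ≤ n) (σ : Perm (Fin n))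
    (h : ∀ i : Fin n, (i : ℕ) < k → (σ i : ℕ) < k) (j : Fin k) :
    Fin.castLE hk (restrictFin hk σ h j) = σ (Fin.castLE hk j) :=
  rfl

theorem lt_iff_of_forall_lt (hk : k ≤ n) (σ : Perm (Fin n))
    (h : ∀ i : Fin n, (i : ℕ) < k → (σ i : ℕ) < k) (i : Fin n) :
    (i : ℕ) < k ↔ (σ i : ℕ) < k := by
  refine ⟨h i, fun hi => ?_⟩
  obtain ⟨j, hj⟩ := (restrictFin hk σ h).surjective ⟨σ i, hi⟩
  have hσ : σ (Fin.castLE hk j) = σ i := by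
    rw [← castLE_restrictFin hk σ h, hj]
    rfl
  rw [← σ.injective hσ]
  exact j.isLt

end Equiv.Perm

theorem eq_zero_of_forall_freq_pos {X ι E : Type*} [TopologicalSpace X] [TopologicalSpace E]
    [T2Space E] [Zero E] {f : (ι → Cplus X) → E} (hf : Continuous f)
    (h : ∀ p : ι → Cplus X, (∀ i, 0 < (p i).1) → f p = 0) (q : ι → Cplus X) : f q = 0 := by
  let shift : NNReal → ι → Cplus X := fun t i => ((q i).1 + t, (q i).2)
  have hshift : Continuous shift := by fun_prop
  have hlim : Filter.Tendsto (f ∘ shift) (nhdsWithin 0 (Set.Ioi 0)) (nhds (f q)) := by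
    simpa [shift] using ((hf.comp hshift).tendsto 0).mono_left nhdsWithin_le_nhds
  refine tendsto_nhds_unique hlim (tendsto_const_nhds.congr' ?_)
  filter_upwards [self_mem_nhdsWithin] with t ht
  exact (h _ fun i => ht.trans_le le_add_self).symm

section Pairing

variable {X : Type*} {ν : Cplus X → ℂ} {ψ : ∀ m : ℕ, (Fin m → Cplus X) → ℂ} {n : ℕ}

def pairingCoeff (n : ℕ) (m : Fin (n + 1)) : ℝ :=
  (16 * Real.pi) ^ (m : ℕ) * Real.sqrt ((n.factorial : ℝ) / ((m : ℕ).factorial : ℝ))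
    / ((n - (m : ℕ)).factorial : ℝ) / (n.factorial : ℝ)

def pairingTerm (ν : Cplus X → ℂ) (ψ : ∀ m : ℕ, (Fin m → Cplus X) → ℂ) (n : ℕ)
    (p : Fin n → Cplus X) (m : Fin (n + 1)) (σ : Equiv.Perm (Fin n)) : ℂ :=
  (∏ i : Fin n, (if (i : ℕ) < (m : ℕ) then (((p (σ i)).1 : ℝ) : ℂ) else ν (p (σ i)))) *
    ψ (m : ℕ) (fun i : Fin (m : ℕ) => p (σ (Fin.castLE (Nat.lt_succ_iff.mp m.isLt) i)))

theorem pairing_eq_sum (A : ℂ) (p : Fin n → Cplus X) :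
    pairing A ν ψ n p =
      A * ∑ m : Fin (n + 1), (pairingCoeff n m : ℂ) * ∑ σ, pairingTerm ν ψ n p m σ :=
  rfl

theorem pairingCoeff_pos (m : Fin (n + 1)) : 0 < pairingCoeff n m := by
  unfold pairingCoeff
  positivity

theorem forall_lt_of_pairingTerm_ne_zero {p : Fin n → Cplus X} {k : ℕ}
    (hp : ∀ j : Fin n, k ≤ (j : ℕ) → (p j).1 = 0) {m : Fin (n + 1)} {σ : Equiv.Perm (Fin n)}
    (h : pairingTerm ν ψ n p m σ ≠ 0) (i : Fin n) (hi : (i : ℕ) < m) : (σ i : ℕ) < k := by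
  by_contra hσi
  refine h (mul_eq_zero_of_left (Finset.prod_eq_zero (Finset.mem_univ i) ?_) _)
  simp [hi, hp _ (not_lt.mp hσi)]

theorem pairingTerm_eq_pairingTerm_one_of_forall_lt (hsym : IsSymmFamily ψ) (p : Fin n → Cplus X)
    (m : Fin (n + 1)) {σ : Equiv.Perm (Fin n)} (h : ∀ i : Fin n, (i : ℕ) < m → (σ i : ℕ) < m) :
    pairingTerm ν ψ n p m σ = pairingTerm ν ψ n p m 1 := by
  have hm : (m : ℕ) ≤ n := Nat.lt_succ_iff.mp m.isLt
  have hlt := σ.lt_iff_of_forall_lt hm h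
  have hprod : ∏ i : Fin n, (if (i : ℕ) < m then (((p (σ i)).1 : ℝ) : ℂ) else ν (p (σ i))) =
      ∏ i : Fin n, (if (i : ℕ) < m then (((p i).1 : ℝ) : ℂ) else ν (p i)) := by
    rw [← Equiv.prod_comp σ fun i => if (i : ℕ) < m then (((p i).1 : ℝ) : ℂ) else ν (p i)]
    exact Finset.prod_congr rfl fun i _ => if_congr (hlt i) rfl rfl
  have hψ : (fun i : Fin m => p (σ (Fin.castLE hm i))) =
      (fun i => p (Fin.castLE hm i)) ∘ σ.restrictFin hm h := by
    funext i
    simp only [Function.comp_apply, Equiv.Perm.castLE_restrictFin]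
  simp only [pairingTerm, hprod, hψ, hsym m, Equiv.Perm.coe_one, id_eq]

theorem pairingTerm_eq_zero_or_eq (hsym : IsSymmFamily ψ) {p : Fin n → Cplus X} {k : ℕ}
    (hp : ∀ j : Fin n, k ≤ (j : ℕ) → (p j).1 = 0) (hψ : ∀ m < k, ∀ q, ψ m q = 0)
    (m : Fin (n + 1)) (σ : Equiv.Perm (Fin n)) :
    pairingTerm ν ψ n p m σ = 0 ∨
      ((m : ℕ) = k ∧ pairingTerm ν ψ n p m σ = pairingTerm ν ψ n p m 1) := by
  by_cases hT : pairingTerm ν ψ n p m σ = 0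
  · exact Or.inl hT
  have hσ := forall_lt_of_pairingTerm_ne_zero hp hT
  have hle : (m : ℕ) ≤ k :=
    Fin.le_of_injective_of_forall_lt σ.injective (Nat.lt_succ_iff.mp m.isLt) hσ
  have hkm : k ≤ (m : ℕ) := by
    by_contra hlt
    exact hT (mul_eq_zero_of_right _ (hψ m (not_le.mp hlt) _))
  have hmk : (m : ℕ) = k := le_antisymm hle hkm
  refine Or.inr ⟨hmk, pairingTerm_eq_pairingTerm_one_of_forall_lt hsym p m ?_⟩
  simpa only [hmk] using hσ

end Pairing

def padZeroFreq {X : Type*} {k : ℕ} (p₀ : Fin k → Cplus X) (x₀ : X) (n : ℕ) : Fin n → Cplus X :=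
  fun i => if h : (i : ℕ) < k then p₀ ⟨i, h⟩ else (0, x₀)

theorem pairingTerm_padZeroFreq_one_ne_zero {X : Type*} {ν : Cplus X → ℂ}
    {ψ : ∀ m : ℕ, (Fin m → Cplus X) → ℂ} {k n : ℕ} (hk : k ≤ n) {p₀ : Fin k → Cplus X}
    (hp₀ : ∀ i, 0 < (p₀ i).1) (hψ : ψ k p₀ ≠ 0) {x₀ : X} (hx₀ : ν (0, x₀) ≠ 0) :
    pairingTerm ν ψ n (padZeroFreq p₀ x₀ n) ⟨k, Nat.lt_succ_of_le hk⟩ 1 ≠ 0 := by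
  refine mul_ne_zero (Finset.prod_ne_zero_iff.mpr fun i _ => ?_) ?_
  · by_cases hi : (i : ℕ) < k
    · simpa [padZeroFreq, hi] using (hp₀ ⟨i, hi⟩).ne'
    · simpa [padZeroFreq, hi] using hx₀
  · convert hψ using 2
    simp [padZeroFreq]

theorem bms_state_with_memory_has_infinitely_many_particles_general
    {X : Type*} [TopologicalSpace X] (A : ℂ) (hA : A ≠ 0)
    (ν : Cplus X → ℂ)
    (x₀ : X) (hx₀ : ν (0, x₀) ≠ 0)
    (ψ : ∀ m : ℕ, (Fin m → Cplus X) → ℂ) (hsym : IsSymmFamily ψ)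
    (hcont : ∀ m, Continuous (ψ m))
    (hne : ∃ (m : ℕ) (p : Fin m → Cplus X), (∀ i, 0 < (p i).1) ∧ ψ m p ≠ 0) :
    ∀ N : ℕ, ∃ n, N ≤ n ∧ ∃ p : Fin n → Cplus X, pairing A ν ψ n p ≠ 0 := by
  classical
  intro N
  set k := Nat.find hne
  obtain ⟨p₀, hp₀, hψp₀⟩ : ∃ p₀ : Fin k → Cplus X, (∀ i, 0 < (p₀ i).1) ∧ ψ k p₀ ≠ 0 :=
    Nat.find_spec hne
  have hψ : ∀ m < k, ∀ q, ψ m q = 0 := fun m hm =>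
    eq_zero_of_forall_freq_pos (hcont m) (by simpa using Nat.find_min hne hm)
  have hk : k ≤ max N k := le_max_right N k
  let p := padZeroFreq p₀ x₀ (max N k)
  have hp : ∀ j : Fin (max N k), k ≤ (j : ℕ) → (p j).1 = 0 := fun j hj => by
    simp [p, padZeroFreq, not_lt.mpr hj]
  refine ⟨max N k, le_max_left N k, p, ?_⟩
  rw [pairing_eq_sum]
  refine mul_ne_zero hA ?_
  simp_rw [Finset.mul_sum]
  rw [← Fintype.sum_prod_type']
  refine Finset.sum_ne_zero_of_forall_eq_zero_or_eq (a := (⟨k, Nat.lt_succ_of_le hk⟩, 1))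
    (Finset.mem_univ _) (mul_ne_zero (Complex.ofReal_ne_zero.mpr (pairingCoeff_pos _).ne')
      (pairingTerm_padZeroFreq_one_ne_zero hk hp₀ hψp₀ hx₀)) fun ⟨m, σ⟩ _ => ?_
  rcases pairingTerm_eq_zero_or_eq (ν := ν) hsym hp hψ m σ with hT | ⟨hmk, hT⟩
  · exact Or.inl (by simp [hT])
  · obtain rfl : m = ⟨k, Nat.lt_succ_of_le hk⟩ := Fin.ext hmk
    exact Or.inr (by rw [hT])

/-- **Infinitely many BMS particles**: for nonzero memory (`ν(0,x̂₀) ≠ 0` for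
some direction `x̂₀`) and `A ≠ 0`, any component family which is nonzero at
some configuration of strictly positive frequencies has nonvanishing pairing
with BMS `n`-particle states for arbitrarily large `n`, i.e. the state is
supported on infinitely many BMS particles. -/
theorem bms_state_with_memory_has_infinitely_many_particles
    {X : Type*} [TopologicalSpace X] (A : ℂ) (hA : A ≠ 0)
    (ν : Cplus X → ℂ) (hν : Continuous ν)
    (x₀ : X) (hx₀ : ν (0, x₀) ≠ 0)
    (ψ : ∀ m : ℕ, (Fin m → Cplus X) → ℂ) (hsym : IsSymmFamily ψ)
    (hcont : ∀ m, Continuous (ψ m))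
    (hne : ∃ (m : ℕ) (p : Fin m → Cplus X), (∀ i, 0 < (p i).1) ∧ ψ m p ≠ 0) :
    ∀ N : ℕ, ∃ n, N ≤ n ∧ ∃ p : Fin n → Cplus X, pairing A ν ψ n p ≠ 0 :=
  bms_state_with_memory_has_infinitely_many_particles_general A hA ν x₀ hx₀ ψ hsym hcont hne
end
end

section
/- Fix ω > 0 and z₀ ∈ ℂ, and let G(z) := (ω/(4π)) · ((conj z − conj z₀)/(z − z₀)) · (1 + z₀·conj z)² / ((1+|z|²)(1+|z₀|²)) for z ≠ z₀. Then the function z ↦ |G(z)|² · 4(1+|z|²)^{-2} is Lebesgue-integrable on ℂ. (This is the paper's claim that the memory which arises in gravitational scattering, although not smooth, is square-integrable on the 2-sphere, so that the radiation field has finite energy; 4(1+|z|²)^{-2} is the density of the round sphere measure in stereographic coordinates.) -/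
/-!
The factor `(z̄ - z̄₀)/(z - z₀)` has modulus one, and Lagrange's identity
`|1 + z₀ z̄|² + |z - z₀|² = (1 + |z|²)(1 + |z₀|²)` shows that the remaining factor is at most one
in modulus, so `|G| ≤ ω/(4π)` everywhere. A bounded measurable function is square-integrable
against `4(1 + |z|²)⁻² dz`, which is integrable because `4` exceeds the real dimension of `ℂ`.
-/

noncomputable section

/-- The paper's gravitational memory Green's function (4.10):
`G(z) = (ω/4π) ((z̄ − z̄₀)/(z − z₀)) (1 + z₀ z̄)² / ((1+|z|²)(1+|z₀|²))`. -/
def memG (ω : ℝ) (z₀ z : ℂ) : ℂ :=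
  ((ω / (4 * Real.pi) : ℝ) : ℂ) *
    (((starRingEnd ℂ) z - (starRingEnd ℂ) z₀) / (z - z₀)) *
    (1 + z₀ * (starRingEnd ℂ) z) ^ 2 /
    (((1 + ‖z‖ ^ 2 : ℝ) : ℂ) * ((1 + ‖z₀‖ ^ 2 : ℝ) : ℂ))

open MeasureTheory Module ComplexConjugate

theorem integrable_inv_one_add_norm_sq_sq {E : Type*} [NormedAddCommGroup E]
    [NormedSpace ℝ E] [FiniteDimensional ℝ E] [MeasurableSpace E] [BorelSpace E]
    {μ : Measure E} [μ.IsAddHaarMeasure] (hE : finrank ℝ E < 4) :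
    Integrable (fun x : E => ((1 + ‖x‖ ^ 2) ^ 2)⁻¹) μ := by
  refine (integrable_rpow_neg_one_add_norm_sq (μ := μ) (r := 4) (by exact_mod_cast hE)).congr
    (Filter.Eventually.of_forall fun x => ?_)
  dsimp only
  rw [show (-4 / 2 : ℝ) = -(2 : ℕ) by norm_num, Real.rpow_neg (by positivity), Real.rpow_natCast]

namespace Complex

theorem norm_conj_sub_conj_div_sub_le_one (z w : ℂ) : ‖(conj z - conj w) / (z - w)‖ ≤ 1 := by
  rw [← map_sub, norm_div, norm_conj]
  exact div_self_le_one _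

theorem norm_one_add_mul_conj_sq_add_norm_sub_sq (z w : ℂ) :
    ‖1 + w * conj z‖ ^ 2 + ‖z - w‖ ^ 2 = (1 + ‖z‖ ^ 2) * (1 + ‖w‖ ^ 2) := by
  simp only [← normSq_eq_norm_sq, normSq_apply, add_re, add_im, mul_re, mul_im, conj_re,
    conj_im, one_re, one_im, sub_re, sub_im]
  ring

theorem norm_one_add_mul_conj_sq_le (z w : ℂ) :
    ‖1 + w * conj z‖ ^ 2 ≤ (1 + ‖z‖ ^ 2) * (1 + ‖w‖ ^ 2) := by
  rw [← norm_one_add_mul_conj_sq_add_norm_sub_sq z w]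
  exact le_add_of_nonneg_right (sq_nonneg _)

end Complex

theorem norm_memG_le (ω : ℝ) (z₀ z : ℂ) : ‖memG ω z₀ z‖ ≤ |ω / (4 * Real.pi)| := by
  have hden : 0 < (1 + ‖z‖ ^ 2) * (1 + ‖z₀‖ ^ 2) := by positivity
  rw [memG, norm_div, ← Complex.ofReal_mul, Complex.norm_real, Real.norm_of_nonneg hden.le,
    div_le_iff₀ hden, norm_mul, norm_mul, norm_pow, Complex.norm_real, Real.norm_eq_abs]
  calc |ω / (4 * Real.pi)| * ‖(conj z - conj z₀) / (z - z₀)‖ * ‖1 + z₀ * conj z‖ ^ 2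
      ≤ |ω / (4 * Real.pi)| * 1 * ((1 + ‖z‖ ^ 2) * (1 + ‖z₀‖ ^ 2)) := by
        gcongr
        · exact Complex.norm_conj_sub_conj_div_sub_le_one z z₀
        · exact Complex.norm_one_add_mul_conj_sq_le z z₀
    _ = |ω / (4 * Real.pi)| * ((1 + ‖z‖ ^ 2) * (1 + ‖z₀‖ ^ 2)) := by rw [mul_one]

theorem measurable_memG (ω : ℝ) (z₀ : ℂ) : Measurable (memG ω z₀) := by
  unfold memG
  fun_prop

theorem memG_square_integrable_general (ω : ℝ) (z₀ : ℂ) :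
    MeasureTheory.Integrable
      (fun z : ℂ => ‖memG ω z₀ z‖ ^ 2 * (4 * ((1 + ‖z‖ ^ 2) ^ 2)⁻¹)) := by
  have hdensity : Integrable (fun z : ℂ => 4 * ((1 + ‖z‖ ^ 2) ^ 2)⁻¹) :=
    (integrable_inv_one_add_norm_sq_sq (by simp)).const_mul 4
  refine hdensity.bdd_mul (c := |ω / (4 * Real.pi)| ^ 2)
    ((measurable_memG ω z₀).norm.pow_const 2).aestronglyMeasurable
    (Filter.Eventually.of_forall fun z => ?_)
  rw [norm_pow, norm_norm]
  exact pow_le_pow_left₀ (norm_nonneg _) (norm_memG_le ω z₀ z) 2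

/-- The gravitational memory which arises in scattering is square-integrable on
the 2-sphere: `z ↦ |G(z)|² · 4(1+|z|²)⁻²` is Lebesgue-integrable on `ℂ`
(`4(1+|z|²)⁻²` being the density of the round sphere measure in stereographic
coordinates), so the radiation field has finite energy. -/
theorem memG_square_integrable (ω : ℝ) (hω : 0 < ω) (z₀ : ℂ) :
    MeasureTheory.Integrable
      (fun z : ℂ => ‖memG ω z₀ z‖ ^ 2 * (4 * ((1 + ‖z‖ ^ 2) ^ 2)⁻¹)) :=
  memG_square_integrable_general ω z₀

end
end

section
/- Fix ω₀ > 0 and z₀ ∈ ℂ, let p₀ := p(ω₀, z₀), and for z ∈ ℂ let p̂(z) := p(1, z). Then for every z ≠ z₀, (ω₀/(4π)) · ((conj z − conj z₀)/(z − z₀)) · (1 + z₀·conj z)² / ((1+|z|²)(1+|z₀|²)) = −(1/(4π)) · η(p₀, ε̄(z))² / η(p₀, p̂(z)). (This is the paper's identity (4.13) expressing the memory Green's function in the Weinberg soft-factor form p₀^μ p₀^ν ε̄_{μν} / (p₀ · p̂), which identifies the soft coefficient S⁽⁰⁾ in the infrared finite soft graviton theorem.) -/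
/-!
The two Minkowski products are explicit rational functions of `z, z̄`:
with `D = (1 + |z|²)(1 + |z₀|²)`,
`η(p₀, p̂(z)) = −2ω₀ (z − z₀)(z̄ − z̄₀)/D` and `η(p₀, ε̄(z)) = −√2 ω₀ (z̄ − z̄₀)(1 + z₀z̄)/D`.
In `η(p₀, ε̄(z))² / η(p₀, p̂(z))` the common factor `ω₀ (z̄ − z̄₀)` cancels, and what is left
is the memory kernel.
-/
noncomputable section

/-- The Minkowski bilinear form on `ℂ⁴`:
`η(u,v) = −u₀v₀ + u₁v₁ + u₂v₂ + u₃v₃`. -/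
def eta (u v : Fin 4 → ℂ) : ℂ := -(u 0 * v 0) + u 1 * v 1 + u 2 * v 2 + u 3 * v 3

/-- The null momentum of frequency `ω` and stereographic angular direction `z`:
`p(ω,z) = ω (1, (z+z̄)/(1+|z|²), −i(z−z̄)/(1+|z|²), (1−|z|²)/(1+|z|²))`. -/
def pmom (ω : ℝ) (z : ℂ) : Fin 4 → ℂ := fun i =>
  (ω : ℂ) * ![1,
    (z + (starRingEnd ℂ) z) / (1 + ((‖z‖ : ℝ) : ℂ) ^ 2),
    -Complex.I * (z - (starRingEnd ℂ) z) / (1 + ((‖z‖ : ℝ) : ℂ) ^ 2),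
    (1 - ((‖z‖ : ℝ) : ℂ) ^ 2) / (1 + ((‖z‖ : ℝ) : ℂ) ^ 2)] i

/-- The conformal factor `P(z) = (1 + |z|²)/√2`. -/
def Pconf (z : ℂ) : ℝ := (1 + ‖z‖ ^ 2) / Real.sqrt 2

/-- The polarization vector `ε(z) = (1/2P)(0, 1−z², i(1+z²), −2z)`. -/
def epsPol (z : ℂ) : Fin 4 → ℂ := fun i =>
  (1 / (2 * ((Pconf z : ℝ) : ℂ))) * ![0, 1 - z ^ 2, Complex.I * (1 + z ^ 2), -2 * z] i

/-- The polarization vector `ε̄(z) = (1/2P)(0, 1−z̄², −i(1+z̄²), −2z̄)`. -/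
def epsBarPol (z : ℂ) : Fin 4 → ℂ := fun i =>
  (1 / (2 * ((Pconf z : ℝ) : ℂ))) *
    ![0, 1 - ((starRingEnd ℂ) z) ^ 2, -Complex.I * (1 + ((starRingEnd ℂ) z) ^ 2),
      -2 * (starRingEnd ℂ) z] i


open ComplexConjugate

lemma one_add_mul_conj_ne_zero (w : ℂ) : 1 + w * conj w ≠ 0 := by
  rw [Complex.mul_conj']
  exact_mod_cast (by positivity : (1 + ‖w‖ ^ 2 : ℝ) ≠ 0)

lemma eta_pmom_pmom (ω ω' : ℝ) (w z : ℂ) :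
    eta (pmom ω w) (pmom ω' z) =
      -2 * ω * ω' * ((z - w) * (conj z - conj w)) /
        (((1 + ‖z‖ ^ 2 : ℝ) : ℂ) * ((1 + ‖w‖ ^ 2 : ℝ) : ℂ)) := by
  have hz := one_add_mul_conj_ne_zero z
  have hw := one_add_mul_conj_ne_zero w
  simp only [eta, pmom, Matrix.cons_val_zero, Matrix.cons_val_one, Matrix.cons_val_two,
    Matrix.cons_val_three, Matrix.head_cons, Matrix.tail_cons, Complex.ofReal_add,
    Complex.ofReal_one, Complex.ofReal_pow, ← Complex.mul_conj']
  field_simp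
  ring_nf
  simp only [Complex.I_sq]
  ring

lemma eta_pmom_epsBarPol (ω : ℝ) (w z : ℂ) :
    eta (pmom ω w) (epsBarPol z) =
      -(Real.sqrt 2 : ℂ) * ω * ((conj z - conj w) * (1 + w * conj z)) /
        (((1 + ‖z‖ ^ 2 : ℝ) : ℂ) * ((1 + ‖w‖ ^ 2 : ℝ) : ℂ)) := by
  have hz := one_add_mul_conj_ne_zero z
  have hw := one_add_mul_conj_ne_zero w
  simp only [eta, pmom, epsBarPol, Pconf, Matrix.cons_val_zero, Matrix.cons_val_one,
    Matrix.cons_val_two, Matrix.cons_val_three, Matrix.head_cons, Matrix.tail_cons,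
    Complex.ofReal_div, Complex.ofReal_add, Complex.ofReal_one, Complex.ofReal_pow,
    ← Complex.mul_conj']
  field_simp
  ring_nf
  simp only [Complex.I_sq]
  ring

lemma mul_sq_div_mul_left {K : Type*} [Field K] (a b c : K) :
    (a * b) ^ 2 / (a * c) = a * (b ^ 2 / c) := by
  rcases eq_or_ne a 0 with rfl | ha
  · simp
  · rw [mul_pow, sq a, mul_assoc, mul_div_mul_left _ _ ha, mul_div_assoc]

theorem memG_eq_weinberg_soft_factor_general
    (ω₀ : ℝ) (z₀ : ℂ) (z : ℂ) :
    ((ω₀ / (4 * Real.pi) : ℝ) : ℂ) *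
        (((starRingEnd ℂ) z - (starRingEnd ℂ) z₀) / (z - z₀)) *
        (1 + z₀ * (starRingEnd ℂ) z) ^ 2 /
        (((1 + ‖z‖ ^ 2 : ℝ) : ℂ) * ((1 + ‖z₀‖ ^ 2 : ℝ) : ℂ))
      = -((1 / (4 * Real.pi) : ℝ) : ℂ) *
          (eta (pmom ω₀ z₀) (epsBarPol z)) ^ 2 / eta (pmom ω₀ z₀) (pmom 1 z) := by
  have hε : eta (pmom ω₀ z₀) (epsBarPol z) = (ω₀ * (conj z - conj z₀)) *
      (-(Real.sqrt 2 : ℂ) * (1 + z₀ * conj z) /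
        (((1 + ‖z‖ ^ 2 : ℝ) : ℂ) * ((1 + ‖z₀‖ ^ 2 : ℝ) : ℂ))) := by
    rw [eta_pmom_epsBarPol]
    ring
  have hp : eta (pmom ω₀ z₀) (pmom 1 z) = (ω₀ * (conj z - conj z₀)) *
      (-2 * (z - z₀) / (((1 + ‖z‖ ^ 2 : ℝ) : ℂ) * ((1 + ‖z₀‖ ^ 2 : ℝ) : ℂ))) := by
    rw [eta_pmom_pmom, Complex.ofReal_one]
    ring
  have hsqrt2 : (Real.sqrt 2 : ℂ) ^ 2 = 2 := by exact_mod_cast Real.sq_sqrt zero_le_two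
  rw [hε, hp, mul_div_assoc (-((1 / (4 * Real.pi) : ℝ) : ℂ)), mul_sq_div_mul_left]
  field_simp
  rw [hsqrt2]
  push_cast
  ring

/-- The paper's identity (4.13): the gravitational memory Green's function
equals the Weinberg soft factor. For `ω₀ > 0`, `p₀ := p(ω₀,z₀)`,
`p̂(z) := p(1,z)`, and every `z ≠ z₀`,
`(ω₀/4π)((z̄−z̄₀)/(z−z₀))(1+z₀z̄)²/((1+|z|²)(1+|z₀|²))
  = −(1/4π) η(p₀, ε̄(z))² / η(p₀, p̂(z))`. -/
theorem memG_eq_weinberg_soft_factor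
    (ω₀ : ℝ) (hω₀ : 0 < ω₀) (z₀ : ℂ) (z : ℂ) (hz : z ≠ z₀) :
    ((ω₀ / (4 * Real.pi) : ℝ) : ℂ) *
        (((starRingEnd ℂ) z - (starRingEnd ℂ) z₀) / (z - z₀)) *
        (1 + z₀ * (starRingEnd ℂ) z) ^ 2 /
        (((1 + ‖z‖ ^ 2 : ℝ) : ℂ) * ((1 + ‖z₀‖ ^ 2 : ℝ) : ℂ))
      = -((1 / (4 * Real.pi) : ℝ) : ℂ) *
          (eta (pmom ω₀ z₀) (epsBarPol z)) ^ 2 / eta (pmom ω₀ z₀) (pmom 1 z) :=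
  memG_eq_weinberg_soft_factor_general ω₀ z₀ z

end
end
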